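/- Let k,n ∈ ℕ with 4 ≤ k ≤ n−2, and let ℋ be a hierarchy over [n] all of whose clusters have cardinality at least 2 and at most n−k. For t ∈ ∪_{H∈ℋ}H, let m_t and M_t denote respectively the minimal and the maximal ℋ-cluster containing t. Let i,l ∈ [n] and X ∈ ([n]−{i,l} choose k−1) satisfy: if i,l ∈ ∪ℋ and M_i∩M_l=∅, then X contains an element of m_i−{i} and an element of m_l−{l}; if i,l ∈ ∪ℋ and M_i∩M_l≠∅, then: if m_i ⊆ m_l, X contains an element of m_i−{i} and an element of [n]−M_i; if m_l ⊆ m_i, X contains an element of m_l−{l} and an element of [n]−M_l; if m_i∩m_l=∅, X contains an element of m_i−{i}, an element of m_l−{l}, and an element of [n]−M_i; if i ∈ ∪ℋ and l ∉ ∪ℋ, then X contains an element of m_i−{i} and an element of [n]−M_i; if l ∈ ∪ℋ and i ∉ ∪ℋ, then X contains an element of m_l−{l} and an element of [n]−M_l. Then, in the free ℤ-module ⊕_{H∈ℋ} ℤH, Σ_{H∈ℋ, H∩({i}∪X)≠∅, H⊉{i}∪X} H − Σ_{H∈ℋ, H∩({l}∪X)≠∅, H⊉{l}∪X} H = 0.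 -/

import Mathlib

open scoped Classical
open Finset

noncomputable section

/-- The total weight of the minimal subtree of a tree `G` spanning the vertex set `A`:
the sum of the weights of those edges of `G` that lie on every walk between some pair
of vertices of `A` (in a tree, these are exactly the edges of the minimal subtree
containing `A`). -/
def treeWeight {V : Type} [Fintype V] (G : SimpleGraph V) (w : Sym2 V → ℝ)
    (A : Finset V) : ℝ :=
  ∑ e ∈ (Finset.univ : Finset (Sym2 V)),
    if e ∈ G.edgeSet ∧ ∃ a ∈ A, ∃ b ∈ A, ∀ p : G.Walk a b, e ∈ p.edges then w e else 0

/-- A weighted finite tree whose set of leaves is (the image of) `α`. -/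
structure WTree (α : Type) [Fintype α] : Type 1 where
  V : Type
  fintypeV : Fintype V
  G : SimpleGraph V
  isTree : G.IsTree
  w : Sym2 V → ℝ
  label : α → V
  label_inj : Function.Injective label
  leaf_iff : ∀ v : V, (G.neighborSet v).ncard = 1 ↔ v ∈ Set.range label

attribute [instance] WTree.fintypeV

namespace WTree

variable {α : Type} [Fintype α]

/-- The `k`-weight `D_I` : the weight of the minimal subtree containing the leaves
labelled by `I`. -/
def D (T : WTree α) (I : Finset α) : ℝ := treeWeight T.G T.w (I.image T.label)

/-- A node is a vertex of degree `> 2`. -/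
def IsNode (T : WTree α) (v : T.V) : Prop := 2 < (T.G.neighborSet v).ncard

/-- Two vertices are neighbours if the path between them contains exactly one node. -/
def Neighbours (T : WTree α) (a b : T.V) : Prop :=
  a ≠ b ∧ ∃ p : T.G.Walk a b, p.IsPath ∧
    (p.support.toFinset.filter (fun v => T.IsNode v)).card = 1

/-- Two leaves (given by their labels) are neighbours. -/
def LeafNbr (T : WTree α) (i j : α) : Prop := T.Neighbours (T.label i) (T.label j)

/-- A set of leaves is a cherry if any two of its elements are neighbours. -/
def IsCherry (T : WTree α) (C : Finset α) : Prop :=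
  ∀ i ∈ C, ∀ j ∈ C, i ≠ j → T.LeafNbr i j

/-- A cherry is complete if it is not strictly contained in another cherry. -/
def IsCompleteCherry (T : WTree α) (C : Finset α) : Prop :=
  T.IsCherry C ∧ ∀ C' : Finset α, T.IsCherry C' → ¬ C ⊂ C'

/-- Buneman's index `⟨i,j|l,m⟩` : in the subtree spanned by the four leaves, `i,j` are
neighbours, `l,m` are neighbours and `i,l` are not neighbours; equivalently, the path
from `i` to `j` is disjoint from the path from `l` to `m`. -/
def Buneman (T : WTree α) (i j l m : α) : Prop :=
  i ≠ j ∧ l ≠ m ∧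
  ∃ (p : T.G.Walk (T.label i) (T.label j)) (q : T.G.Walk (T.label l) (T.label m)),
    p.IsPath ∧ q.IsPath ∧ ∀ v, v ∈ p.support → v ∉ q.support

/-- The edge `e` lies on the (unique) path between `a` and `b`. -/
def edgeBetween (T : WTree α) (a b : T.V) (e : Sym2 T.V) : Prop :=
  ∀ p : T.G.Walk a b, e ∈ p.edges

/-- The set of leaf labels lying on the `u`-side of the edge `{u,v}`. -/
def sideLeaves (T : WTree α) (u v : T.V) : Finset α :=
  Finset.univ.filter fun i => T.edgeBetween (T.label i) v s(u, v)

/-- A pseudostar of kind `(n,k)` (with `n = #α`): every edge divides the set of leaves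
into two sets such that at least one of them has cardinality `≥ k`. -/
def IsPseudostar (T : WTree α) (k : ℕ) : Prop :=
  ∀ u v : T.V, T.G.Adj u v →
    k ≤ (T.sideLeaves u v).card ∨ k ≤ (T.sideLeaves v u).card

/-- A tree is essential if it has no vertices of degree 2. -/
def IsEssential (T : WTree α) : Prop := ∀ v : T.V, (T.G.neighborSet v).ncard ≠ 2

/-- The edge `e` lies on the twig of the leaf labelled `i`, i.e. on the path from that
leaf to the nearest node (equivalently, on the path from the leaf to every node). -/
def OnTwig (T : WTree α) (i : α) (e : Sym2 T.V) : Prop :=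
  ∀ w : T.V, T.IsNode w → T.edgeBetween (T.label i) w e

/-- An edge is internal if it is an edge of the tree lying on no twig. -/
def IsInternalEdge (T : WTree α) (e : Sym2 T.V) : Prop :=
  e ∈ T.G.edgeSet ∧ ∀ i : α, ¬ T.OnTwig i e

/-- All internal edges have nonzero weight. -/
def InternalNonzero (T : WTree α) : Prop := ∀ e, T.IsInternalEdge e → T.w e ≠ 0

/-- All edges have positive weight. -/
def PositiveWeighted (T : WTree α) : Prop := ∀ e ∈ T.G.edgeSet, 0 < T.w e

/-- All weights are nonnegative and all internal edges have positive weight. -/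
def NNIPWeighted (T : WTree α) : Prop :=
  (∀ e ∈ T.G.edgeSet, 0 ≤ T.w e) ∧ ∀ e, T.IsInternalEdge e → 0 < T.w e

/-- The edge `e` belongs to the minimal subtree containing the leaves labelled by `I`. -/
def inMinSubtree (T : WTree α) (I : Finset α) (e : Sym2 T.V) : Prop :=
  e ∈ T.G.edgeSet ∧ ∃ a ∈ I, ∃ b ∈ I, T.edgeBetween (T.label a) (T.label b) e

end WTree

/-- Isomorphism of weighted trees fixing the labelled leaves. -/
def WIso {α : Type} [Fintype α] (T T' : WTree α) : Prop :=
  ∃ φ : T.V ≃ T'.V,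
    (∀ a b : T.V, T.G.Adj a b ↔ T'.G.Adj (φ a) (φ b)) ∧
    (∀ a b : T.V, T.G.Adj a b → T.w s(a, b) = T'.w s(φ a, φ b)) ∧
    ∀ i : α, φ (T.label i) = T'.label i

/-- A family indexed by the `k`-subsets of `α` is l-treelike if it is realized by a
weighted tree with leaf set `α`. -/
def IsLTreelike (α : Type) [Fintype α] (k : ℕ) (D : Finset α → ℝ) : Prop :=
  ∃ T : WTree α, ∀ I : Finset α, I.card = k → T.D I = D I

/-- p-l-treelike : realized by a positive-weighted tree with leaf set `α`. -/
def IsPLTreelike (α : Type) [Fintype α] (k : ℕ) (D : Finset α → ℝ) : Prop :=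
  ∃ T : WTree α, T.PositiveWeighted ∧ ∀ I : Finset α, I.card = k → T.D I = D I

/-- nn-ip-l-treelike : realized by a nonnegative-weighted, internal-positive-weighted
tree with leaf set `α`. -/
def IsNNIPLTreelike (α : Type) [Fintype α] (k : ℕ) (D : Finset α → ℝ) : Prop :=
  ∃ T : WTree α, T.NNIPWeighted ∧ ∀ I : Finset α, I.card = k → T.D I = D I

/-- p-treelike : realized on a subset of the vertices of a positive-weighted tree. -/
def IsPTreelike (n k : ℕ) (D : Finset (Fin n) → ℝ) : Prop :=
  ∃ (V : Type) (_ : Fintype V) (G : SimpleGraph V) (w : Sym2 V → ℝ) (f : Fin n → V),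
    G.IsTree ∧ Function.Injective f ∧ (∀ e ∈ G.edgeSet, 0 < w e) ∧
    ∀ I : Finset (Fin n), I.card = k → treeWeight G w (I.image f) = D I


/-- A hierarchy: a set system in which any two members intersect in `∅` or in one
of the two. -/
def IsHierarchy {β : Type} (ℋ : Set (Finset β)) : Prop :=
  ∀ H ∈ ℋ, ∀ H' ∈ ℋ, H ∩ H' = ∅ ∨ H ∩ H' = H ∨ H ∩ H' = H'

/-- The element `Σ_{H ∈ ℋ, H ∩ A ≠ ∅, H ⊉ A} H` of the free ℤ-module on the clusters. -/
def hsum {β : Type} (ℋ : Set (Finset β)) (A : Finset β) : Finset β →₀ ℤ :=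
  ∑ᶠ H ∈ {H : Finset β | H ∈ ℋ ∧ (H ∩ A).Nonempty ∧ ¬ A ⊆ H}, Finsupp.single H 1

/-- `m` is a minimal cluster of `ℋ` containing `t`. -/
def IsMinCluster {β : Type} (ℋ : Set (Finset β)) (t : β) (m : Finset β) : Prop :=
  m ∈ ℋ ∧ t ∈ m ∧ ∀ H ∈ ℋ, t ∈ H → ¬ H ⊂ m

/-- `M` is a maximal cluster of `ℋ` containing `t`. -/
def IsMaxCluster {β : Type} (ℋ : Set (Finset β)) (t : β) (M : Finset β) : Prop :=
  M ∈ ℋ ∧ t ∈ M ∧ ∀ H ∈ ℋ, t ∈ H → ¬ M ⊂ H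

/-- `M` is a maximal cluster of `ℋ` containing the cluster `J`. -/
def IsMaxClusterContaining {β : Type} (ℋ : Set (Finset β)) (J M : Finset β) : Prop :=
  M ∈ ℋ ∧ J ⊆ M ∧ ∀ H ∈ ℋ, J ⊆ H → ¬ M ⊂ H

section FamHierarchy

variable (n k : ℕ) (D : Finset (Fin n) → ℝ)

/-- `𝒞⁰` : the sets `Z` of cardinality `≥ 2` such that for all `i,j ∈ Z` the quantity
`D_{i,X} - D_{j,X}` does not depend on `X ∈ ([n] - {i,j} choose k-1)`. -/
def famC0 : Set (Finset (Fin n)) :=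
  {Z | 2 ≤ Z.card ∧ ∀ i ∈ Z, ∀ j ∈ Z, ∀ X X' : Finset (Fin n),
    X.card = k - 1 → i ∉ X → j ∉ X → X'.card = k - 1 → i ∉ X' → j ∉ X' →
    D (insert i X) - D (insert j X) = D (insert i X') - D (insert j X')}

/-- `𝒞̲⁰` : the maximal elements of `𝒞⁰`. -/
def famMaxC0 : Set (Finset (Fin n)) :=
  {Z | Z ∈ famC0 n k D ∧ ∀ Z' ∈ famC0 n k D, ¬ Z ⊂ Z'}

/-- Condition (b) in the definition of `𝒢^s` : there are `R, S` in
`([n]-{i,j,x,y} choose k-2)` with `D_{ijR} + D_{xyR} ≠ D_{ixR} + D_{jyR}` and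
`D_{ijS} + D_{xyS} ≠ D_{iyS} + D_{jxS}`. -/
def famCondB (i j x y : Fin n) : Prop :=
  ∃ R S : Finset (Fin n),
    R.card = k - 2 ∧ i ∉ R ∧ j ∉ R ∧ x ∉ R ∧ y ∉ R ∧
    S.card = k - 2 ∧ i ∉ S ∧ j ∉ S ∧ x ∉ S ∧ y ∉ S ∧
    D (insert i (insert j R)) + D (insert x (insert y R)) ≠
      D (insert i (insert x R)) + D (insert j (insert y R)) ∧
    D (insert i (insert j S)) + D (insert x (insert y S)) ≠
      D (insert i (insert y S)) + D (insert j (insert x S))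

/-- Condition (b) in the definition of `𝒞^s` (with the roles of the pairs permuted). -/
def famCondB' (i j x y : Fin n) : Prop :=
  ∃ R S : Finset (Fin n),
    R.card = k - 2 ∧ i ∉ R ∧ j ∉ R ∧ x ∉ R ∧ y ∉ R ∧
    S.card = k - 2 ∧ i ∉ S ∧ j ∉ S ∧ x ∉ S ∧ y ∉ S ∧
    D (insert i (insert x R)) + D (insert j (insert y R)) ≠
      D (insert i (insert j R)) + D (insert x (insert y R)) ∧
    D (insert i (insert x S)) + D (insert j (insert y S)) ≠
      D (insert i (insert y S)) + D (insert j (insert x S))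

/-- `𝒢⁰`. -/
def famG0 : Set (Finset (Fin n)) :=
  {Z | Z ∈ famMaxC0 n k D ∧ Z.card ≤ n - k ∧
    ∀ i ∈ Z, ∀ j ∈ Z, ∀ x y : Fin n, x ∉ Z → y ∉ Z →
      (({i, j} : Finset (Fin n)) ∈ famMaxC0 n k D ∧
        ({x, y} : Finset (Fin n)) ∈ famMaxC0 n k D) ∨
      famCondB n k D i j x y}

/-- `𝒞^s`, relative to the surviving set `N = [n]^s`. -/
def famCs (N : Finset (Fin n)) : Set (Finset (Fin n)) :=
  {Z | Z ⊆ N ∧ 2 ≤ Z.card ∧ ∀ i ∈ Z, ∀ j ∈ Z, ∀ x y : Fin n,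
    x ∈ N → y ∈ N → x ≠ i → x ≠ j → y ≠ i → y ≠ j →
    ¬ (({i, x} : Finset (Fin n)) ∈ famMaxC0 n k D ∧
        ({j, y} : Finset (Fin n)) ∈ famMaxC0 n k D) ∧
    ¬ famCondB' n k D i j x y}

/-- `𝒞̲^s` : the maximal elements of `𝒞^s`. -/
def famMaxCs (N : Finset (Fin n)) : Set (Finset (Fin n)) :=
  {Z | Z ∈ famCs n k D N ∧ ∀ Z' ∈ famCs n k D N, ¬ Z ⊂ Z'}

/-- The chain relation expressing that `y0` descends from `y` through the history
`hs = [𝒢⁰, …, 𝒢^{s-1}]` of pruned families. -/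
def descChain : List (Set (Finset (Fin n))) → Fin n → Fin n → Prop
  | [], y0, y => y0 = y
  | G :: rest, y0, y =>
      ∃ y1 : Fin n, (y1 = y0 ∨ ∃ Z ∈ G, y0 ∈ Z ∧ y1 ∈ Z) ∧ descChain rest y1 y

/-- `∂Z` : the set of elements of `[n]` descending from an element of `Z`. -/
def bdry (hs : List (Set (Finset (Fin n)))) (Z : Finset (Fin n)) : Finset (Fin n) :=
  Finset.univ.filter fun y0 => ∃ ys ∈ Z, descChain n hs y0 ys

/-- `𝒢^s` (for `s ≥ 1`), relative to the surviving set `N = [n]^s` and the history `hs`. -/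
def famGs (N : Finset (Fin n)) (hs : List (Set (Finset (Fin n)))) :
    Set (Finset (Fin n)) :=
  {Z | Z ∈ famMaxCs n k D N ∧ (bdry n hs Z).card ≤ n - k ∧
    ∀ i ∈ Z, ∀ j ∈ Z, ∀ x y : Fin n, x ∉ Z → y ∉ Z →
      (({i, j} : Finset (Fin n)) ∈ famMaxC0 n k D ∧
        ({x, y} : Finset (Fin n)) ∈ famMaxC0 n k D) ∨
      famCondB n k D i j x y}

/-- The pair `([n]^s, [𝒢⁰, …, 𝒢^{s-1}])`. -/
def famStage : ℕ → Finset (Fin n) × List (Set (Finset (Fin n)))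
  | 0 => (Finset.univ, [])
  | s + 1 =>
      let p := famStage s
      let G := if s = 0 then famG0 n k D else famGs n k D p.1 p.2
      (p.1.filter fun y => ∀ Z ∈ G, y ∈ Z → ∀ z ∈ Z, y ≤ z, p.2 ++ [G])

/-- `𝒢^s`. -/
def famGAt (s : ℕ) : Set (Finset (Fin n)) :=
  if s = 0 then famG0 n k D
  else famGs n k D (famStage n k D s).1 (famStage n k D s).2

/-- The hierarchy over `[n]` associated to the family `{D_I}`. -/
def famHier : Set (Finset (Fin n)) :=
  {A | ∃ s : ℕ, ∃ Z ∈ famGAt n k D s, A = bdry n (famStage n k D s).2 Z}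

/-- Condition (i): if `ℋ` covers `[n]` then the number of maximal clusters is not 2. -/
def CondI {n : ℕ} (ℋ : Set (Finset (Fin n))) : Prop :=
  (∀ x : Fin n, ∃ H ∈ ℋ, x ∈ H) →
    {H | H ∈ ℋ ∧ ∀ H' ∈ ℋ, ¬ H ⊂ H'}.ncard ≠ 2

/-- Condition (ii): for `q ∈ {1,…,n-1}`, `s ∈ {1, k-1}`, `W, W' ∈ ([n] choose s)`,
the sum `Σ_i (D_{W Z_i} - D_{W' Z_i})` takes the same value on all choices of the
`Z_i ∈ ([n]-W-W' choose k-s)` on which the corresponding element of the free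
ℤ-module `⊕_{H ∈ ℋ} ℤ H` is the same. -/
def CondII (n k : ℕ) (D : Finset (Fin n) → ℝ) (ℋ : Set (Finset (Fin n))) : Prop :=
  ∀ q : ℕ, 1 ≤ q → q ≤ n - 1 → ∀ s : ℕ, s = 1 ∨ s = k - 1 →
    ∀ W W' : Finset (Fin n), W.card = s → W'.card = s →
    ∀ Z Z' : ℕ → Finset (Fin n),
      (∀ i < q, (Z i).card = k - s ∧ Disjoint (Z i) W ∧ Disjoint (Z i) W') →
      (∀ i < q, (Z' i).card = k - s ∧ Disjoint (Z' i) W ∧ Disjoint (Z' i) W') →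
      (∑ i ∈ Finset.range q, (hsum ℋ (W ∪ Z i) - hsum ℋ (W' ∪ Z i)) =
        ∑ i ∈ Finset.range q, (hsum ℋ (W ∪ Z' i) - hsum ℋ (W' ∪ Z' i))) →
      (∑ i ∈ Finset.range q, (D (W ∪ Z i) - D (W' ∪ Z i)) =
        ∑ i ∈ Finset.range q, (D (W ∪ Z' i) - D (W' ∪ Z' i)))

end FamHierarchy

section Pruning

namespace WTree

variable {α : Type} [Fintype α]

/-- The subtree of `T` induced on the vertex set `S` (as a graph on the ambient
vertex set). Pruning a cherry, i.e. contracting the twigs of its leaves, is realized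
by deleting the vertices of those twigs except the stalk. -/
def restrictG (T : WTree α) (S : Set T.V) : SimpleGraph T.V where
  Adj a b := T.G.Adj a b ∧ a ∈ S ∧ b ∈ S
  symm := ⟨fun _ _ h => ⟨h.1.symm, h.2.2, h.2.1⟩⟩
  loopless := ⟨fun a h => T.G.irrefl h.1⟩

/-- Degree in the pruned tree. -/
def rdeg (T : WTree α) (S : Set T.V) (v : T.V) : ℕ :=
  ((T.restrictG S).neighborSet v).ncard

/-- Leaf of the pruned tree. -/
def rleaf (T : WTree α) (S : Set T.V) (v : T.V) : Prop := v ∈ S ∧ T.rdeg S v = 1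

/-- Node (vertex of degree `> 2`) of the pruned tree. -/
def rnode (T : WTree α) (S : Set T.V) (v : T.V) : Prop := v ∈ S ∧ 2 < T.rdeg S v

/-- Neighbours in the pruned tree: the path between them contains exactly one node. -/
def rnbr (T : WTree α) (S : Set T.V) (a b : T.V) : Prop :=
  a ≠ b ∧ ∃ p : (T.restrictG S).Walk a b, p.IsPath ∧
    (p.support.toFinset.filter (fun v => T.rnode S v)).card = 1

/-- Cherry of the pruned tree: a set of leaves any two of which are neighbours. -/
def rCherry (T : WTree α) (S : Set T.V) (C : Set T.V) : Prop :=
  (∀ v ∈ C, T.rleaf S v) ∧ ∀ a ∈ C, ∀ b ∈ C, a ≠ b → T.rnbr S a b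

/-- Complete cherry of the pruned tree. -/
def rCompleteCherry (T : WTree α) (S : Set T.V) (C : Set T.V) : Prop :=
  T.rCherry S C ∧ ∀ C' : Set T.V, T.rCherry S C' → ¬ C ⊂ C'

/-- The stalk of a cherry: the node lying on the path from any element of the cherry
to any node. -/
def rStalk (T : WTree α) (S : Set T.V) (C : Set T.V) (v : T.V) : Prop :=
  T.rnode S v ∧ ∀ a ∈ C, ∀ w : T.V, T.rnode S w →
    ∀ p : (T.restrictG S).Walk a w, p.IsPath → v ∈ p.support

/-- `v` is on the twig of the leaf `ℓ` in the pruned tree: `v` is not a node and lies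
on the path from `ℓ` to every node. -/
def rTwigVert (T : WTree α) (S : Set T.V) (ℓ v : T.V) : Prop :=
  v ∈ S ∧ ¬ T.rnode S v ∧ ∀ w : T.V, T.rnode S w →
    ∀ p : (T.restrictG S).Walk ℓ w, p.IsPath → v ∈ p.support

/-- The vertex set obtained by pruning the cherry `C` (contracting the twigs of its
leaves). -/
def pruneCherry (T : WTree α) (S : Set T.V) (C : Set T.V) : Set T.V :=
  S \ {v | ∃ ℓ ∈ C, T.rTwigVert S ℓ v}

/-- A good cherry: a complete cherry whose stalk is a leaf of the tree obtained by
pruning it. -/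
def rGoodCherry (T : WTree α) (S : Set T.V) (C : Set T.V) : Prop :=
  T.rCompleteCherry S C ∧ ∃ v : T.V, T.rStalk S C v ∧ T.rleaf (T.pruneCherry S C) v

/-- The leaf labelled `x` (of the original tree) descends from the leaf `y` of the
pruned tree: the path in the original tree from `x` to `y` contains no leaf of the
pruned tree other than `y`. -/
def descLeaf (T : WTree α) (S : Set T.V) (x : α) (y : T.V) : Prop :=
  T.rleaf S y ∧ ∀ p : T.G.Walk (T.label x) y, p.IsPath →
    ∀ v ∈ p.support, T.rleaf S v → v = y

/-- `∂C` : the set of labels descending from an element of `C`. -/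
def bdryV (T : WTree α) (S : Set T.V) (C : Set T.V) : Finset α :=
  Finset.univ.filter fun x => ∃ y ∈ C, T.descLeaf S x y

/-- One pruning step: prune all good cherries `C` with `#∂C ≤ r`. -/
def pruneStage (T : WTree α) (r : ℕ) (S : Set T.V) : Set T.V :=
  S \ {v | ∃ C : Set T.V, T.rGoodCherry S C ∧ (T.bdryV S C).card ≤ r ∧
    ∃ ℓ ∈ C, T.rTwigVert S ℓ v}

/-- The vertex set of `P^s`. -/
def stageSet (T : WTree α) (r : ℕ) : ℕ → Set T.V
  | 0 => Set.univ
  | s + 1 => T.pruneStage r (T.stageSet r s)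

/-- The hierarchy associated to the pseudostar `T` (with `r = n - k`): the sets `∂C`
for `C` a good cherry of some `P^s` with `#∂C ≤ r`; when `L(P^s)` is the union of two
complete cherries both with `#∂C_i ≤ r`, only the one whose `∂` contains the minimum
of `∂C₁ ∪ ∂C₂` is included. -/
def psHier [LinearOrder α] (T : WTree α) (r : ℕ) : Set (Finset α) :=
  {A | ∃ (s : ℕ) (C : Set T.V),
    T.rGoodCherry (T.stageSet r s) C ∧
    (T.bdryV (T.stageSet r s) C).card ≤ r ∧
    A = T.bdryV (T.stageSet r s) C ∧
    ∀ C₂ : Set T.V, T.rCompleteCherry (T.stageSet r s) C₂ →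
      (∀ v : T.V, T.rleaf (T.stageSet r s) v ↔ v ∈ C ∪ C₂) →
      (T.bdryV (T.stageSet r s) C₂).card ≤ r →
      ∃ m ∈ T.bdryV (T.stageSet r s) C,
        ∀ x ∈ T.bdryV (T.stageSet r s) C ∪ T.bdryV (T.stageSet r s) C₂, m ≤ x}

/-- The edge `e` belongs to the twig of the leaf `v` in the pruned tree on `S`. -/
def rOnTwigEdge (T : WTree α) (S : Set T.V) (v : T.V) (e : Sym2 T.V) : Prop :=
  e ∈ (T.restrictG S).edgeSet ∧ ∀ w : T.V, T.rnode S w →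
    ∀ p : (T.restrictG S).Walk v w, p.IsPath → e ∈ p.edges

end WTree

end Pruning

/-! If `X` meets the minimal cluster containing `t` and is not contained in the maximal one,
then, since the clusters containing `t` form a chain between these two, `X` meets every
cluster through `t` without lying inside it. For such a cluster `H` the conditions
`H ∩ ({t} ∪ X) ≠ ∅` and `H ⊉ {t} ∪ X` both reduce to `H ∩ X ≠ ∅`, so the sum does not
depend on `t`. The hypotheses on `X` provide exactly this for `t = i` and `t = l`; when
`M_i ∩ M_l = ∅`, the element of `m_l` in `X` is what lies outside `M_i`, and vice versa. -/

section Hierarchy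

variable {β : Type} {ℋ : Set (Finset β)} {s t : β} {A B m M N X : Finset β}

theorem IsHierarchy.disjoint_or_subset_or_subset (hH : IsHierarchy ℋ) (hA : A ∈ ℋ)
    (hB : B ∈ ℋ) : Disjoint A B ∨ A ⊆ B ∨ B ⊆ A := by
  rcases hH A hA B hB with h | h | h
  · exact .inl (disjoint_iff_inter_eq_empty.2 h)
  · exact .inr (.inl (inter_eq_left.1 h))
  · exact .inr (.inr (inter_eq_right.1 h))

theorem IsHierarchy.subset_or_subset_of_mem (hH : IsHierarchy ℋ) (hA : A ∈ ℋ) (hB : B ∈ ℋ)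
    (htA : t ∈ A) (htB : t ∈ B) : A ⊆ B ∨ B ⊆ A :=
  (hH.disjoint_or_subset_or_subset hA hB).resolve_left (not_disjoint_iff.2 ⟨t, htA, htB⟩)

theorem IsMinCluster.subset (hH : IsHierarchy ℋ) (hm : IsMinCluster ℋ t m) (hA : A ∈ ℋ)
    (ht : t ∈ A) : m ⊆ A :=
  (hH.subset_or_subset_of_mem hm.1 hA hm.2.1 ht).elim id fun hAm =>
    (LE.le.eq_of_not_ssubset hAm (hm.2.2 A hA ht)).symm.subset

theorem IsMaxCluster.subset (hH : IsHierarchy ℋ) (hM : IsMaxCluster ℋ t M) (hA : A ∈ ℋ)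
    (ht : t ∈ A) : A ⊆ M :=
  (hH.subset_or_subset_of_mem hA hM.1 ht hM.2.1).elim id fun hMA =>
    (LE.le.eq_of_not_ssubset hMA (hM.2.2 A hA ht)).symm.subset

theorem IsMaxCluster.eq_of_not_disjoint (hH : IsHierarchy ℋ) (hM : IsMaxCluster ℋ s M)
    (hN : IsMaxCluster ℋ t N) (h : ¬ Disjoint M N) : M = N := by
  rcases hH.disjoint_or_subset_or_subset hM.1 hN.1 with hd | hMN | hNM
  · exact absurd hd h
  · exact hMN.antisymm (hM.subset hH hN.1 (hMN hM.2.1))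
  · exact (hN.subset hH hM.1 (hNM hN.2.1)).antisymm hNM

theorem exists_isMinCluster [Finite β] (h : ∃ H ∈ ℋ, t ∈ H) : ∃ m, IsMinCluster ℋ t m := by
  obtain ⟨H, hH, htH⟩ := h
  obtain ⟨m, hm⟩ := (Set.toFinite {H | H ∈ ℋ ∧ t ∈ H}).exists_minimal ⟨H, hH, htH⟩
  exact ⟨m, hm.prop.1, hm.prop.2, fun A hA ht => hm.not_lt ⟨hA, ht⟩⟩

theorem exists_isMaxCluster [Finite β] (h : ∃ H ∈ ℋ, t ∈ H) : ∃ M, IsMaxCluster ℋ t M := by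
  obtain ⟨H, hH, htH⟩ := h
  obtain ⟨M, hM⟩ := (Set.toFinite {H | H ∈ ℋ ∧ t ∈ H}).exists_maximal ⟨H, hH, htH⟩
  exact ⟨M, hM.prop.1, hM.prop.2, fun A hA ht => hM.not_gt ⟨hA, ht⟩⟩

def SplitsClustersContaining (ℋ : Set (Finset β)) (X : Finset β) (t : β) : Prop :=
  ∀ H ∈ ℋ, t ∈ H → ¬ Disjoint X H ∧ ¬ X ⊆ H

theorem SplitsClustersContaining.of_not_exists_mem (h : ¬ ∃ H ∈ ℋ, t ∈ H) :
    SplitsClustersContaining ℋ X t :=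
  fun H hH ht => (h ⟨H, hH, ht⟩).elim

theorem SplitsClustersContaining.of_min_max (hH : IsHierarchy ℋ) (hm : IsMinCluster ℋ t m)
    (hM : IsMaxCluster ℋ t M) (hXm : ¬ Disjoint X m) (hXM : ¬ X ⊆ M) :
    SplitsClustersContaining ℋ X t := fun _ hA ht =>
  ⟨fun hd => hXm (hd.mono_right (hm.subset hH hA ht)),
    fun hXA => hXM (hXA.trans (hM.subset hH hA ht))⟩

theorem SplitsClustersContaining.of_min_max_pair (hH : IsHierarchy ℋ) {ms Ms mt Mt : Finset β}
    (hms : IsMinCluster ℋ s ms) (hMs : IsMaxCluster ℋ s Ms)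
    (hmt : IsMinCluster ℋ t mt) (hMt : IsMaxCluster ℋ t Mt)
    (h_disj : Disjoint Ms Mt → ¬ Disjoint X ms ∧ ¬ Disjoint X mt)
    (h_le : ¬ Disjoint Ms Mt → ms ⊆ mt → ¬ Disjoint X ms ∧ ¬ X ⊆ Ms)
    (h_ge : ¬ Disjoint Ms Mt → mt ⊆ ms → ¬ Disjoint X mt ∧ ¬ X ⊆ Mt)
    (h_sep : ¬ Disjoint Ms Mt → Disjoint ms mt →
      ¬ Disjoint X ms ∧ ¬ Disjoint X mt ∧ ¬ X ⊆ Ms) :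
    SplitsClustersContaining ℋ X s ∧ SplitsClustersContaining ℋ X t := by
  by_cases hM : Disjoint Ms Mt
  · obtain ⟨hs, ht⟩ := h_disj hM
    exact ⟨of_min_max hH hms hMs hs fun hX => ht (hM.mono hX (hMt.subset hH hmt.1 hmt.2.1)),
      of_min_max hH hmt hMt ht fun hX => hs (hM.symm.mono hX (hMs.subset hH hms.1 hms.2.1))⟩
  have hMM : Ms = Mt := hMs.eq_of_not_disjoint hH hMt hM
  subst hMM
  rcases hH.disjoint_or_subset_or_subset hms.1 hmt.1 with hd | hst | hts
  · obtain ⟨hs, ht, hX⟩ := h_sep hM hd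
    exact ⟨of_min_max hH hms hMs hs hX, of_min_max hH hmt hMt ht hX⟩
  · obtain ⟨hs, hX⟩ := h_le hM hst
    exact ⟨of_min_max hH hms hMs hs hX,
      of_min_max hH hmt hMt (fun hd => hs (hd.mono_right hst)) hX⟩
  · obtain ⟨ht, hX⟩ := h_ge hM hts
    exact ⟨of_min_max hH hms hMs (fun hd => ht (hd.mono_right hts)) hX,
      of_min_max hH hmt hMt ht hX⟩

theorem SplitsClustersContaining.not_disjoint_insert_and_iff [DecidableEq β]
    (hX : SplitsClustersContaining ℋ X t) (hA : A ∈ ℋ) :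
    ¬ Disjoint A (insert t X) ∧ ¬ insert t X ⊆ A ↔ ¬ Disjoint A X := by
  constructor
  · rintro ⟨hd, -⟩
    by_cases ht : t ∈ A
    · exact fun h => (hX A hA ht).1 h.symm
    · exact fun h => hd (disjoint_insert_right.2 ⟨ht, h⟩)
  · intro hd
    refine ⟨fun h => hd (disjoint_insert_right.1 h).2, fun hsub => ?_⟩
    rw [insert_subset_iff] at hsub
    exact (hX A hA hsub.1).2 hsub.2

theorem hsum_insert_eq_hsum_insert [DecidableEq β] (hs : SplitsClustersContaining ℋ X s)
    (ht : SplitsClustersContaining ℋ X t) : hsum ℋ (insert s X) = hsum ℋ (insert t X) := by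
  refine finsum_mem_congr (Set.ext fun _ => and_congr_right fun hA => ?_) fun _ _ => rfl
  have h := (hs.not_disjoint_insert_and_iff hA).trans (ht.not_disjoint_insert_and_iff hA).symm
  -- the intersections inside `hsum` use the classical `DecidableEq` instance
  rwa [@not_disjoint_iff_nonempty_inter _ (fun a b => Classical.propDecidable (a = b)),
    @not_disjoint_iff_nonempty_inter _ (fun a b => Classical.propDecidable (a = b))] at h

end Hierarchy

theorem lemma_X_i_l_general (n : ℕ)
    (ℋ : Set (Finset (Fin n))) (hH : IsHierarchy ℋ)
    (i l : Fin n) (X : Finset (Fin n))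
    -- if `i, l ∈ ∪ℋ` and `M_i ∩ M_l = ∅`:
    (hyp1 : ∀ mi Mi ml Ml : Finset (Fin n),
      IsMinCluster ℋ i mi → IsMaxCluster ℋ i Mi →
      IsMinCluster ℋ l ml → IsMaxCluster ℋ l Ml → Mi ∩ Ml = ∅ →
      (∃ b ∈ X, b ∈ mi ∧ b ≠ i) ∧ (∃ b ∈ X, b ∈ ml ∧ b ≠ l))
    -- if `i, l ∈ ∪ℋ`, `M_i ∩ M_l ≠ ∅` and `m_i ⊆ m_l`:
    (hyp2a : ∀ mi Mi ml Ml : Finset (Fin n),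
      IsMinCluster ℋ i mi → IsMaxCluster ℋ i Mi →
      IsMinCluster ℋ l ml → IsMaxCluster ℋ l Ml → (Mi ∩ Ml).Nonempty → mi ⊆ ml →
      (∃ b ∈ X, b ∈ mi ∧ b ≠ i) ∧ (∃ c ∈ X, c ∉ Mi))
    -- if `i, l ∈ ∪ℋ`, `M_i ∩ M_l ≠ ∅` and `m_l ⊆ m_i`:
    (hyp2b : ∀ mi Mi ml Ml : Finset (Fin n),
      IsMinCluster ℋ i mi → IsMaxCluster ℋ i Mi →
      IsMinCluster ℋ l ml → IsMaxCluster ℋ l Ml → (Mi ∩ Ml).Nonempty → ml ⊆ mi →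
      (∃ b ∈ X, b ∈ ml ∧ b ≠ l) ∧ (∃ c ∈ X, c ∉ Ml))
    -- if `i, l ∈ ∪ℋ`, `M_i ∩ M_l ≠ ∅` and `m_i ∩ m_l = ∅`:
    (hyp2c : ∀ mi Mi ml Ml : Finset (Fin n),
      IsMinCluster ℋ i mi → IsMaxCluster ℋ i Mi →
      IsMinCluster ℋ l ml → IsMaxCluster ℋ l Ml → (Mi ∩ Ml).Nonempty → mi ∩ ml = ∅ →
      (∃ b ∈ X, b ∈ mi ∧ b ≠ i) ∧ (∃ b ∈ X, b ∈ ml ∧ b ≠ l) ∧ (∃ c ∈ X, c ∉ Mi))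
    -- if `i ∈ ∪ℋ` and `l ∉ ∪ℋ`:
    (hyp3 : (¬ ∃ H ∈ ℋ, l ∈ H) → ∀ mi Mi : Finset (Fin n),
      IsMinCluster ℋ i mi → IsMaxCluster ℋ i Mi →
      (∃ b ∈ X, b ∈ mi ∧ b ≠ i) ∧ (∃ c ∈ X, c ∉ Mi))
    -- if `l ∈ ∪ℋ` and `i ∉ ∪ℋ`:
    (hyp4 : (¬ ∃ H ∈ ℋ, i ∈ H) → ∀ ml Ml : Finset (Fin n),
      IsMinCluster ℋ l ml → IsMaxCluster ℋ l Ml →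
      (∃ b ∈ X, b ∈ ml ∧ b ≠ l) ∧ (∃ c ∈ X, c ∉ Ml)) :
    hsum ℋ (insert i X) = hsum ℋ (insert l X) := by
  have meets : ∀ {m : Finset (Fin n)} {t : Fin n}, (∃ b ∈ X, b ∈ m ∧ b ≠ t) → ¬ Disjoint X m :=
    fun ⟨b, hbX, hbm, _⟩ => not_disjoint_iff.2 ⟨b, hbX, hbm⟩
  suffices h : SplitsClustersContaining ℋ X i ∧ SplitsClustersContaining ℋ X l from
    hsum_insert_eq_hsum_insert h.1 h.2
  by_cases hi : ∃ H ∈ ℋ, i ∈ H <;> by_cases hl : ∃ H ∈ ℋ, l ∈ H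
  · obtain ⟨mi, hmi⟩ := exists_isMinCluster hi
    obtain ⟨Mi, hMi⟩ := exists_isMaxCluster hi
    obtain ⟨ml, hml⟩ := exists_isMinCluster hl
    obtain ⟨Ml, hMl⟩ := exists_isMaxCluster hl
    refine SplitsClustersContaining.of_min_max_pair hH hmi hMi hml hMl
      (fun hM => ?_) (fun hM hs => ?_) (fun hM hs => ?_) (fun hM hd => ?_)
    · exact (hyp1 mi Mi ml Ml hmi hMi hml hMl (disjoint_iff_inter_eq_empty.1 hM)).imp meets meets
    · exact (hyp2a mi Mi ml Ml hmi hMi hml hMl (not_disjoint_iff_nonempty_inter.1 hM) hs).imp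
        meets not_subset.2
    · exact (hyp2b mi Mi ml Ml hmi hMi hml hMl (not_disjoint_iff_nonempty_inter.1 hM) hs).imp
        meets not_subset.2
    · obtain ⟨hbi, hbl, hc⟩ := hyp2c mi Mi ml Ml hmi hMi hml hMl
        (not_disjoint_iff_nonempty_inter.1 hM) (disjoint_iff_inter_eq_empty.1 hd)
      exact ⟨meets hbi, meets hbl, not_subset.2 hc⟩
  · obtain ⟨mi, hmi⟩ := exists_isMinCluster hi
    obtain ⟨Mi, hMi⟩ := exists_isMaxCluster hi
    obtain ⟨hb, hc⟩ := hyp3 hl mi Mi hmi hMi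
    exact ⟨.of_min_max hH hmi hMi (meets hb) (not_subset.2 hc), .of_not_exists_mem hl⟩
  · obtain ⟨ml, hml⟩ := exists_isMinCluster hl
    obtain ⟨Ml, hMl⟩ := exists_isMaxCluster hl
    obtain ⟨hb, hc⟩ := hyp4 hi ml Ml hml hMl
    exact ⟨.of_not_exists_mem hi, .of_min_max hH hml hMl (meets hb) (not_subset.2 hc)⟩
  · exact ⟨.of_not_exists_mem hi, .of_not_exists_mem hl⟩

/-- **Lemma.** Let `4 ≤ k ≤ n-2` and let `ℋ` be a hierarchy over `[n]` whose clusters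
have cardinality at least `2` and at most `n-k`. Let `i, l ∈ [n]` and let
`X ∈ ([n]-{i,l} choose k-1)` satisfy the stated conditions (expressed below in terms
of the minimal clusters `m_i, m_l` and the maximal clusters `M_i, M_l` containing `i`
resp. `l`). Then, in the free ℤ-module on `ℋ`,
`Σ_{H ∈ ℋ, H∩({i}∪X)≠∅, H⊉{i}∪X} H - Σ_{H ∈ ℋ, H∩({l}∪X)≠∅, H⊉{l}∪X} H = 0`. -/
theorem lemma_X_i_l (n k : ℕ) (hk4 : 4 ≤ k) (hkn : k ≤ n - 2)
    (ℋ : Set (Finset (Fin n))) (hH : IsHierarchy ℋ)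
    (hcard : ∀ H ∈ ℋ, 2 ≤ H.card ∧ H.card ≤ n - k)
    (i l : Fin n) (X : Finset (Fin n))
    (hXcard : X.card = k - 1) (hiX : i ∉ X) (hlX : l ∉ X)
    -- if `i, l ∈ ∪ℋ` and `M_i ∩ M_l = ∅`:
    (hyp1 : ∀ mi Mi ml Ml : Finset (Fin n),
      IsMinCluster ℋ i mi → IsMaxCluster ℋ i Mi →
      IsMinCluster ℋ l ml → IsMaxCluster ℋ l Ml → Mi ∩ Ml = ∅ →
      (∃ b ∈ X, b ∈ mi ∧ b ≠ i) ∧ (∃ b ∈ X, b ∈ ml ∧ b ≠ l))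
    -- if `i, l ∈ ∪ℋ`, `M_i ∩ M_l ≠ ∅` and `m_i ⊆ m_l`:
    (hyp2a : ∀ mi Mi ml Ml : Finset (Fin n),
      IsMinCluster ℋ i mi → IsMaxCluster ℋ i Mi →
      IsMinCluster ℋ l ml → IsMaxCluster ℋ l Ml → (Mi ∩ Ml).Nonempty → mi ⊆ ml →
      (∃ b ∈ X, b ∈ mi ∧ b ≠ i) ∧ (∃ c ∈ X, c ∉ Mi))
    -- if `i, l ∈ ∪ℋ`, `M_i ∩ M_l ≠ ∅` and `m_l ⊆ m_i`:
    (hyp2b : ∀ mi Mi ml Ml : Finset (Fin n),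
      IsMinCluster ℋ i mi → IsMaxCluster ℋ i Mi →
      IsMinCluster ℋ l ml → IsMaxCluster ℋ l Ml → (Mi ∩ Ml).Nonempty → ml ⊆ mi →
      (∃ b ∈ X, b ∈ ml ∧ b ≠ l) ∧ (∃ c ∈ X, c ∉ Ml))
    -- if `i, l ∈ ∪ℋ`, `M_i ∩ M_l ≠ ∅` and `m_i ∩ m_l = ∅`:
    (hyp2c : ∀ mi Mi ml Ml : Finset (Fin n),
      IsMinCluster ℋ i mi → IsMaxCluster ℋ i Mi →
      IsMinCluster ℋ l ml → IsMaxCluster ℋ l Ml → (Mi ∩ Ml).Nonempty → mi ∩ ml = ∅ →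
      (∃ b ∈ X, b ∈ mi ∧ b ≠ i) ∧ (∃ b ∈ X, b ∈ ml ∧ b ≠ l) ∧ (∃ c ∈ X, c ∉ Mi))
    -- if `i ∈ ∪ℋ` and `l ∉ ∪ℋ`:
    (hyp3 : (¬ ∃ H ∈ ℋ, l ∈ H) → ∀ mi Mi : Finset (Fin n),
      IsMinCluster ℋ i mi → IsMaxCluster ℋ i Mi →
      (∃ b ∈ X, b ∈ mi ∧ b ≠ i) ∧ (∃ c ∈ X, c ∉ Mi))
    -- if `l ∈ ∪ℋ` and `i ∉ ∪ℋ`: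
    (hyp4 : (¬ ∃ H ∈ ℋ, i ∈ H) → ∀ ml Ml : Finset (Fin n),
      IsMinCluster ℋ l ml → IsMaxCluster ℋ l Ml →
      (∃ b ∈ X, b ∈ ml ∧ b ≠ l) ∧ (∃ c ∈ X, c ∉ Ml)) :
    hsum ℋ (insert i X) = hsum ℋ (insert l X) :=
  lemma_X_i_l_general n ℋ hH i l X hyp1 hyp2a hyp2b hyp2c hyp3 hyp4
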